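/- (Norm comparison for Jacobi-type fields along a ray; the key displayed estimate in the proof of Theorem 6.3 of the paper.) For every C₁ ≥ 0 there exists a constant C₂ ≥ 0, depending only on C₁ (and not on m, a, ε or J), such that the following holds. Let m ≥ 1 be an integer, a ∈ (0,1], ε ∈ [0,1], and let J : [a,1] → ℝ^m be twice continuously differentiable with ‖J″(r)‖ ≤ C₁ ‖J(r)‖ for all r ∈ [a,1], and with | ‖J(a)‖ − a | ≤ ε a and | ‖J′(a)‖ − 1 | ≤ 3ε. Then | ‖J(r)‖ − r | ≤ C₂ (a + ε r + r³) for all r ∈ [a,1]. -/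

import Mathlib

open Set Real

set_option maxHeartbeats 1000000 in
/-- Norm comparison for Jacobi-type fields along a ray; the key
displayed estimate in the proof of Theorem 6.3.  For every `C₁ ≥ 0` there is
`C₂ ≥ 0` (depending only on `C₁`) such that: for every integer `m ≥ 1`,
`a ∈ (0,1]`, `ε ∈ [0,1]`, and every twice continuously differentiable
`J : [a,1] → ℝ^m` (with first derivative `J'` and second derivative `J''`)
satisfying `‖J''(r)‖ ≤ C₁ ‖J(r)‖` on `[a,1]`, `|‖J(a)‖ - a| ≤ ε a` and
`|‖J'(a)‖ - 1| ≤ 3ε`, one has `|‖J(r)‖ - r| ≤ C₂ (a + ε r + r³)` for all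
`r ∈ [a,1]`. -/
theorem jacobi_field_norm_comparison (C₁ : ℝ) (hC₁ : 0 ≤ C₁) :
    ∃ C₂ : ℝ, 0 ≤ C₂ ∧
      ∀ (m : ℕ), 1 ≤ m → ∀ (a ε : ℝ), 0 < a → a ≤ 1 → 0 ≤ ε → ε ≤ 1 →
        ∀ J J' J'' : ℝ → EuclideanSpace ℝ (Fin m),
          (∀ r ∈ Set.Icc a 1, HasDerivWithinAt J (J' r) (Set.Icc a 1) r) →
          (∀ r ∈ Set.Icc a 1, HasDerivWithinAt J' (J'' r) (Set.Icc a 1) r) →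
          ContinuousOn J'' (Set.Icc a 1) →
          (∀ r ∈ Set.Icc a 1, ‖J'' r‖ ≤ C₁ * ‖J r‖) →
          |‖J a‖ - a| ≤ ε * a →
          |‖J' a‖ - 1| ≤ 3 * ε →
          ∀ r ∈ Set.Icc a 1, |‖J r‖ - r| ≤ C₂ * (a + ε * r + r ^ 3) := by
  set K : ℝ := 1 + C₁ with hK
  set B : ℝ := 4 * Real.exp K with hBdef
  set M : ℝ := 2 + B with hMdef
  have hBpos : 0 < B := by positivity
  have hMpos : 0 < M := by positivity
  refine ⟨3 + C₁ * M, by positivity, ?_⟩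
  intro m hm a ε ha ha1 hε hε1 J J' J'' hJ hJ' hJ''c hJ''b hJa hJ'a
  intro r hr
  have haIcc : a ∈ Icc a 1 := ⟨le_refl a, ha1⟩
  have contJ : ContinuousOn J (Icc a 1) := fun x hx => (hJ x hx).continuousWithinAt
  have contJ' : ContinuousOn J' (Icc a 1) := fun x hx => (hJ' x hx).continuousWithinAt
  -- bounds at a
  have hJaub : ‖J a‖ ≤ 2 * a := by
    have := abs_le.1 hJa
    nlinarith [this.2]
  have hJ'aub : ‖J' a‖ ≤ 4 := by
    have := abs_le.1 hJ'a
    nlinarith [this.2]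
  -- Gronwall for the pair (J, J')
  have hpair : ∀ x ∈ Icc a 1, ‖J x‖ ≤ B ∧ ‖J' x‖ ≤ B := by
    have hfc : ContinuousOn (fun x => (J x, J' x)) (Icc a 1) := contJ.prodMk contJ'
    have hfd : ∀ x ∈ Ico a 1, HasDerivWithinAt (fun x => (J x, J' x)) (J' x, J'' x) (Ici x) x := by
      intro x hx
      exact ((hJ x (Ico_subset_Icc_self hx)).prodMk (hJ' x (Ico_subset_Icc_self hx))).mono_of_mem_nhdsWithin
        (Icc_mem_nhdsGE_of_mem hx)
    have hgb : ∀ x ∈ Icc a 1, ‖(J x, J' x)‖ ≤ gronwallBound 4 K 0 (x - a) := by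
      refine norm_le_gronwallBound_of_norm_deriv_right_le hfc hfd ?_ ?_
      · rw [Prod.norm_def]
        exact max_le (hJaub.trans (by linarith)) hJ'aub
      · intro x hx
        rw [Prod.norm_def, Prod.norm_def]
        have h1 : ‖J' x‖ ≤ max ‖J x‖ ‖J' x‖ := le_max_right _ _
        have h2 : ‖J'' x‖ ≤ C₁ * ‖J x‖ := hJ''b x (Ico_subset_Icc_self hx)
        have h3 : ‖J x‖ ≤ max ‖J x‖ ‖J' x‖ := le_max_left _ _
        have h4 : (0:ℝ) ≤ max ‖J x‖ ‖J' x‖ := le_trans (norm_nonneg _) h3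
        rw [add_zero]
        refine max_le ?_ ?_
        · nlinarith
        · nlinarith
    intro x hx
    have := hgb x hx
    rw [gronwallBound_ε0] at this
    have hx1 : x - a ≤ 1 := by have := hx.2; linarith
    have hKpos : (0:ℝ) ≤ K := by simp [hK]; linarith
    have hexp : Real.exp (K * (x - a)) ≤ Real.exp K := by
      apply Real.exp_le_exp.2
      nlinarith [hx.1]
    have hb : ‖(J x, J' x)‖ ≤ B := by
      rw [hBdef]; nlinarith
    rw [Prod.norm_def] at hb
    exact ⟨(le_max_left _ _).trans hb, (le_max_right _ _).trans hb⟩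
  -- linear bound on ‖J x‖
  have hMx : ∀ x ∈ Icc a 1, ‖J x‖ ≤ M * x := by
    intro x hx
    have hseg : ‖J x - J a‖ ≤ B * (x - a) := by
      refine norm_image_sub_le_of_norm_deriv_right_le_segment contJ
        (fun y hy => (hJ y (Ico_subset_Icc_self hy)).mono_of_mem_nhdsWithin (Icc_mem_nhdsGE_of_mem hy))
        (fun y hy => (hpair y (Ico_subset_Icc_self hy)).2) x hx
    have := norm_sub_norm_le (J x) (J a)
    have hax : a ≤ x := hx.1
    nlinarith [norm_nonneg (J x)]
  -- bound on ‖J' s - J' a‖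
  have hJ'd : ∀ s ∈ Icc a 1, ‖J' s - J' a‖ ≤ C₁ * M / 2 * s ^ 2 := by
    have key : ∀ s ∈ Icc a 1, ‖J' s - J' a‖ ≤ C₁ * M / 2 * (s ^ 2 - a ^ 2) := by
      refine fun s hs => image_norm_le_of_norm_deriv_right_le_deriv_boundary
        (f := fun s => J' s - J' a) (f' := J'')
        (contJ'.sub continuousOn_const)
        (fun y hy => ((hJ' y (Ico_subset_Icc_self hy)).sub_const (J' a)).mono_of_mem_nhdsWithin
          (Icc_mem_nhdsGE_of_mem hy))
        (B := fun t => C₁ * M / 2 * (t ^ 2 - a ^ 2)) (by simp) (B' := fun t => C₁ * M * t) ?_ ?_ hs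
      · intro x
        have h := ((hasDerivAt_pow 2 x).sub_const (a ^ 2)).const_mul (C₁ * M / 2)
        exact h.congr_deriv (by push_cast; ring)
      · intro y hy
        have h1 := hJ''b y (Ico_subset_Icc_self hy)
        have h2 := mul_le_mul_of_nonneg_left (hMx y (Ico_subset_Icc_self hy)) hC₁
        calc ‖J'' y‖ ≤ C₁ * ‖J y‖ := h1
          _ ≤ C₁ * (M * y) := h2
          _ = C₁ * M * y := by ring
    intro s hs
    have h := key s hs
    have h2 : (0:ℝ) ≤ C₁ * M * a ^ 2 := by positivity
    nlinarith
  -- bound on Taylor remainder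
  have hrem : ‖J r - J a - (r - a) • J' a‖ ≤ C₁ * M / 6 * r ^ 3 := by
    have key : ‖J r - J a - (r - a) • J' a‖ ≤ C₁ * M / 6 * (r ^ 3 - a ^ 3) := by
      refine image_norm_le_of_norm_deriv_right_le_deriv_boundary
        (f := fun s => J s - J a - (s - a) • J' a) (f' := fun s => J' s - J' a)
        ((contJ.sub continuousOn_const).sub
          ((continuousOn_id.sub continuousOn_const).smul continuousOn_const))
        (fun y hy => ?_) (B := fun t => C₁ * M / 6 * (t ^ 3 - a ^ 3)) (by simp) (B' := fun t => C₁ * M / 2 * t ^ 2) ?_ ?_ hr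
      · have hd : HasDerivWithinAt (fun s : ℝ => (s - a) • J' a) ((1:ℝ) • J' a) (Ici y) y :=
          ((hasDerivAt_id y).sub_const a).hasDerivWithinAt.smul_const (J' a)
        rw [one_smul] at hd
        exact (((hJ y (Ico_subset_Icc_self hy)).mono_of_mem_nhdsWithin
          (Icc_mem_nhdsGE_of_mem hy)).sub_const (J a)).sub hd
      · intro x
        have h := ((hasDerivAt_pow 3 x).sub_const (a ^ 3)).const_mul (C₁ * M / 6)
        exact h.congr_deriv (by push_cast; ring)
      · exact fun y hy => hJ'd y (Ico_subset_Icc_self hy)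
    have ha3 : (0:ℝ) ≤ C₁ * M * a ^ 3 := by positivity
    nlinarith
  -- combine
  have hA : |‖J r‖ - ‖J a + (r - a) • J' a‖| ≤ C₁ * M / 6 * r ^ 3 := by
    refine le_trans (abs_norm_sub_norm_le _ _) ?_
    have : J r - (J a + (r - a) • J' a) = J r - J a - (r - a) • J' a := by abel
    rw [this]; exact hrem
  have har : a ≤ r := hr.1
  have hr1 : r ≤ 1 := hr.2
  have hnL : |‖J a + (r - a) • J' a‖ - r| ≤ 3 * a + 3 * (ε * r) := by
    set L := J a + (r - a) • J' a with hL
    have hsm : ‖(r - a) • J' a‖ = (r - a) * ‖J' a‖ := by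
      rw [norm_smul, Real.norm_eq_abs, abs_of_nonneg (by linarith)]
    have hub : ‖L‖ ≤ ‖J a‖ + (r - a) * ‖J' a‖ := by
      rw [hL, ← hsm]; exact norm_add_le _ _
    have hlb : (r - a) * ‖J' a‖ ≤ ‖L‖ + ‖J a‖ := by
      have h := norm_sub_le L (J a)
      rw [show L - J a = (r - a) • J' a by rw [hL]; abel, hsm] at h
      exact h
    have hea := abs_le.1 hJa
    have he' := abs_le.1 hJ'a
    have hra : (0:ℝ) ≤ r - a := by linarith
    have hp1 : 0 ≤ (r - a) * (‖J' a‖ - (1 - 3 * ε)) :=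
      mul_nonneg hra (by linarith [he'.1])
    have hp2 : 0 ≤ (r - a) * ((1 + 3 * ε) - ‖J' a‖) :=
      mul_nonneg hra (by linarith [he'.2])
    rw [abs_le]
    constructor
    · nlinarith [hea.2, norm_nonneg (J a), mul_nonneg hε (le_of_lt ha)]
    · nlinarith [hea.2, mul_nonneg hε (le_of_lt ha)]
  have hr0 : 0 < r := lt_of_lt_of_le ha har
  have habs := abs_sub_le (‖J r‖) (‖J a + (r - a) • J' a‖) r
  have hq1 : (0:ℝ) ≤ C₁ * M * a := by positivity
  have hq2 : (0:ℝ) ≤ C₁ * M * (ε * r) := by positivity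
  have hq3 : (0:ℝ) ≤ C₁ * M * r ^ 3 := by positivity
  have hq4 : (0:ℝ) ≤ r ^ 3 := by positivity
  calc |‖J r‖ - r| ≤ |‖J r‖ - ‖J a + (r - a) • J' a‖| + |‖J a + (r - a) • J' a‖ - r| := habs
    _ ≤ C₁ * M / 6 * r ^ 3 + (3 * a + 3 * (ε * r)) := add_le_add hA hnL
    _ ≤ (3 + C₁ * M) * (a + ε * r + r ^ 3) := by nlinarith
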